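/- arXiv:1906.00436 — 6 statements merged into one kernel-verified Lean document; each statement's English description precedes it below -/
import Mathlib

section
/- Let ψ : X → ℝ be a strongly convex function on a closed convex set X. Then the convex conjugate ψ*(z) = sup_{x∈X}{⟨z,x⟩ - ψ(x)} is differentiable, and ∇ψ*(z) = argmax_{x∈X}{⟨z,x⟩ - ψ(x)} for every z in the dual space. -/
/-!
For a dual vector `z`, the function `g = z - ψ` is `μ`-strongly concave on `X`. Bounding `g` by `c`
on the compact set `X ∩ closedBall x₀ 1` and using concavity along the segment from `x₀` to `y`
shows `g y ≤ g x₀` once `‖y - x₀‖ ≥ 1 + 2 (c - g x₀) / μ`, so `g` attains its maximum at some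
`m z`. Comparing with the midpoint gives the growth `g y + μ/4 ‖m z - y‖² ≤ g (m z)`; adding these
estimates for `z` and `z'` shows that `z ↦ m z` is `2/μ`-Lipschitz, hence unique. Finally
`0 ≤ ψ*(z + h) - ψ*(z) - h (m z) ≤ h (m (z + h) - m z)`, which is `o(‖h‖)` by continuity of `m`.
-/

open Set Metric Filter Topology Asymptotics

lemma csSup_eq_of_isMaxOn {α : Type*} {s : Set α} {g : α → ℝ} {a : α} (ha : a ∈ s)
    (hmax : IsMaxOn g s a) : sSup {v | ∃ x ∈ s, v = g x} = g a :=
  IsGreatest.csSup_eq ⟨⟨a, ha, rfl⟩, by rintro _ ⟨x, hx, rfl⟩; exact hmax hx⟩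

section StrongConvexity

variable {E : Type*} [NormedAddCommGroup E] [NormedSpace ℝ E] {s : Set E} {m : ℝ} {f : E → ℝ}

lemma StrongConvexOn.strongConcaveOn_sub (hf : StrongConvexOn s m f) (w : E →L[ℝ] ℝ) :
    StrongConcaveOn s m (fun x => w x - f x) := by
  have hw : UniformConcaveOn s 0 w := ((w : E →ₗ[ℝ] ℝ).concaveOn hf.1).uniformConcaveOn_zero
  have h := hw.sub hf
  rwa [zero_add] at h

namespace StrongConcaveOn

lemma add_sq_le_of_isMaxOn (hf : StrongConcaveOn s m f) {a y : E} (ha : a ∈ s)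
    (hmax : IsMaxOn f s a) (hy : y ∈ s) : f y + m / 4 * ‖a - y‖ ^ 2 ≤ f a := by
  have hhalf : (0 : ℝ) ≤ 1 / 2 := by norm_num
  have hmid := hf.2 ha hy hhalf hhalf (add_halves 1)
  have hle := isMaxOn_iff.1 hmax _ (hf.1 ha hy hhalf hhalf (add_halves 1))
  simp only [smul_eq_mul] at hmid
  linarith

lemma le_of_one_add_le_norm_sub (hf : StrongConcaveOn s m f) (hm : 0 < m) {x₀ y : E} {c : ℝ}
    (hx₀ : x₀ ∈ s) (hc : ∀ p ∈ s ∩ closedBall x₀ 1, f p ≤ c) (hy : y ∈ s)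
    (hr : 1 + 2 * (c - f x₀) / m ≤ ‖y - x₀‖) : f y ≤ f x₀ := by
  set r := ‖y - x₀‖
  have hc₀ : f x₀ ≤ c := hc x₀ ⟨hx₀, mem_closedBall_self zero_le_one⟩
  have hr₁ : 1 ≤ r := le_trans (le_add_of_nonneg_right (by have := sub_nonneg.2 hc₀; positivity)) hr
  have hr₀ : 0 < r := by linarith
  have ht₀ : 0 ≤ r⁻¹ := inv_nonneg.2 hr₀.le
  have ht₁ : 0 ≤ 1 - r⁻¹ := sub_nonneg.2 (inv_le_one_of_one_le₀ hr₁)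
  have hp : f (r⁻¹ • y + (1 - r⁻¹) • x₀) ≤ c := by
    refine hc _ ⟨hf.1 hy hx₀ ht₀ ht₁ (add_sub_cancel _ _), ?_⟩
    have : r⁻¹ • y + (1 - r⁻¹) • x₀ - x₀ = r⁻¹ • (y - x₀) := by module
    rw [mem_closedBall, dist_eq_norm, this, norm_smul, Real.norm_of_nonneg ht₀,
      inv_mul_cancel₀ hr₀.ne']
  have hconc := hf.2 hy hx₀ ht₀ ht₁ (add_sub_cancel _ _)
  simp only [smul_eq_mul] at hconc
  have key : f y + (r - 1) * f x₀ + m / 2 * (r - 1) * r ≤ r * c := by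
    have h := mul_le_mul_of_nonneg_left (hconc.trans hp) hr₀.le
    field_simp at h
    nlinarith
  have hrc : 2 * (c - f x₀) ≤ m * (r - 1) := (div_le_iff₀' hm).1 (by linarith)
  nlinarith

lemma exists_isMaxOn [ProperSpace E] (hf : StrongConcaveOn s m f) (hm : 0 < m)
    (hs : IsClosed s) (hne : s.Nonempty) (hcont : ContinuousOn f s) :
    ∃ a ∈ s, IsMaxOn f s a := by
  obtain ⟨x₀, hx₀⟩ := hne
  obtain ⟨p, -, hp⟩ := ((isCompact_closedBall x₀ 1).inter_left hs).exists_isMaxOn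
    ⟨x₀, hx₀, mem_closedBall_self zero_le_one⟩ (hcont.mono inter_subset_left)
  refine hcont.exists_isMaxOn' hs hx₀ ?_
  have hfar := (isCompact_closedBall x₀ (1 + 2 * (f p - f x₀) / m)).compl_mem_cocompact
  filter_upwards [inter_mem_inf hfar (mem_principal_self s)] with y ⟨hyfar, hys⟩
  refine hf.le_of_one_add_le_norm_sub hm hx₀ (fun q hq => isMaxOn_iff.1 hp q hq) hys ?_
  rw [mem_compl_iff, mem_closedBall, not_le, dist_eq_norm] at hyfar
  exact hyfar.le

end StrongConcaveOn

lemma StrongConvexOn.mul_norm_sub_le_of_isMaxOn (hf : StrongConvexOn s m f)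
    {w w' : E →L[ℝ] ℝ} {a a' : E} (ha : a ∈ s) (ha' : a' ∈ s)
    (hmax : IsMaxOn (fun x => w x - f x) s a) (hmax' : IsMaxOn (fun x => w' x - f x) s a') :
    m / 2 * ‖a - a'‖ ≤ ‖w - w'‖ := by
  have h := (hf.strongConcaveOn_sub w).add_sq_le_of_isMaxOn ha hmax ha'
  have h' := (hf.strongConcaveOn_sub w').add_sq_le_of_isMaxOn ha' hmax' ha
  have hop := le_of_abs_le ((w - w').le_opNorm (a - a'))
  simp only [sub_apply, map_sub] at hop
  rw [norm_sub_rev a' a] at h'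
  have hsq : m / 2 * ‖a - a'‖ * ‖a - a'‖ ≤ ‖w - w'‖ * ‖a - a'‖ := by nlinarith
  rcases (norm_nonneg (a - a')).eq_or_lt with h0 | h0
  · rw [← h0]; simp
  · exact le_of_mul_le_mul_right hsq h0

theorem hasFDerivAt_of_continuousAt_argmax {ψ : E → ℝ} {F : (E →L[ℝ] ℝ) → ℝ}
    {M : (E →L[ℝ] ℝ) → E} (hM : ∀ w, M w ∈ s)
    (hmax : ∀ w, IsMaxOn (fun x => w x - ψ x) s (M w)) (hF : ∀ w, F w = w (M w) - ψ (M w))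
    {z : E →L[ℝ] ℝ} (hcont : ContinuousAt M z) :
    HasFDerivAt F (ContinuousLinearMap.apply ℝ ℝ (M z)) z := by
  rw [hasFDerivAt_iff_isLittleO_nhds_zero, isLittleO_iff]
  intro ε hε
  have hMt : Tendsto (fun h => M (z + h)) (𝓝 0) (𝓝 (M z)) :=
    hcont.tendsto.comp (by simpa using (continuous_const_add z).tendsto 0)
  filter_upwards [Metric.tendsto_nhds.1 hMt ε hε] with h hh
  have hlow := isMaxOn_iff.1 (hmax (z + h)) _ (hM z)
  have hupp := isMaxOn_iff.1 (hmax z) _ (hM (z + h))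
  have hop := le_of_abs_le (h.le_opNorm (M (z + h) - M z))
  simp only [add_apply, map_sub] at hlow hupp hop
  rw [dist_eq_norm] at hh
  rw [ContinuousLinearMap.apply_apply, hF, hF]
  simp only [add_apply]
  rw [Real.norm_of_nonneg (by linarith)]
  calc _ ≤ ‖h‖ * ‖M (z + h) - M z‖ := by linarith
    _ ≤ ε * ‖h‖ := by rw [mul_comm]; gcongr

end StrongConvexity

/-- Danskin-type fact: if `ψ : X → ℝ` is (`μ`-)strongly convex on a nonempty closed convex
set `X` in a finite-dimensional normed space, then the convex conjugate
`ψ*(z) = sup_{x ∈ X}{⟨z, x⟩ - ψ x}` is differentiable, and for every dual vector `z` its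
gradient is the (unique) maximizer `argmax_{x ∈ X}{⟨z, x⟩ - ψ x}`; the gradient of
`ψ* : E* → ℝ` at `z` is the evaluation functional `w ↦ w m` of the maximizer `m ∈ E`. -/
theorem stmt_5 {E : Type*} [NormedAddCommGroup E] [NormedSpace ℝ E] [FiniteDimensional ℝ E]
    (X : Set E) (hXc : IsClosed X) (hXconv : Convex ℝ X) (hXne : X.Nonempty)
    (ψ : E → ℝ) (hcont : ContinuousOn ψ X) (μ : ℝ) (hμ : 0 < μ)
    (hsc : ∀ x ∈ X, ∀ y ∈ X, ∀ t ∈ Set.Icc (0 : ℝ) 1,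
      ψ (t • x + (1 - t) • y) ≤ t * ψ x + (1 - t) * ψ y - μ / 2 * t * (1 - t) * ‖x - y‖ ^ 2)
    (ψs : (E →L[ℝ] ℝ) → ℝ)
    (hψs : ∀ z, ψs z = sSup {v : ℝ | ∃ x ∈ X, v = z x - ψ x}) :
    ∀ z : E →L[ℝ] ℝ, ∃ m ∈ X,
      (∀ x ∈ X, z x - ψ x ≤ z m - ψ m) ∧
      (∀ m' ∈ X, (∀ x ∈ X, z x - ψ x ≤ z m' - ψ m') → m' = m) ∧
      HasFDerivAt ψs (ContinuousLinearMap.apply ℝ ℝ m) z := by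
  have hψ : StrongConvexOn X μ ψ := by
    refine ⟨hXconv, fun x hx y hy a b ha _ hab => ?_⟩
    obtain rfl : b = 1 - a := by linarith
    have h := hsc x hx y hy a ⟨ha, by linarith⟩
    simp only [smul_eq_mul]
    linarith
  choose M hMX hMmax using fun w : E →L[ℝ] ℝ =>
    (hψ.strongConcaveOn_sub w).exists_isMaxOn hμ hXc hXne (w.continuous.continuousOn.sub hcont)
  have hMlip : LipschitzWith (2 / μ).toNNReal M := by
    refine LipschitzWith.of_dist_le_mul fun w w' => ?_
    rw [Real.coe_toNNReal _ (by positivity), dist_eq_norm, dist_eq_norm, div_mul_eq_mul_div,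
      le_div_iff₀' hμ]
    linarith [hψ.mul_norm_sub_le_of_isMaxOn (hMX w) (hMX w') (hMmax w) (hMmax w')]
  have hF : ∀ w, ψs w = w (M w) - ψ (M w) := fun w =>
    (hψs w).trans (csSup_eq_of_isMaxOn (hMX w) (hMmax w))
  intro z
  refine ⟨M z, hMX z, fun x hx => hMmax z hx, fun m' hm' hmax' => ?_,
    hasFDerivAt_of_continuousAt_argmax hMX hMmax hF hMlip.continuous.continuousAt⟩
  have h := hψ.mul_norm_sub_le_of_isMaxOn hm' (hMX z) hmax' (hMmax z)
  rw [sub_self, norm_zero] at h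
  have : ‖m' - M z‖ ≤ 0 := by nlinarith [norm_nonneg (m' - M z)]
  exact sub_eq_zero.1 (norm_le_zero_iff.1 this)
end

section
/- Consider the discrete method x_k = θ'_k-weighted combination: x_k = (H_{k-1}/H_k)/(H_{k-1}/H_k + a_k/A_k) · y_{k-1} + (a_k/A_k)/(H_{k-1}/H_k + a_k/A_k) · ∇ψ*(z_{k-1}), z_k = z_{k-1} - H_k (a_k/A_k) ∇f(x_k), y_k = x_k + (a_k/A_k)(∇ψ*(z_k) - ∇ψ*(z_{k-1})), with y_0 = ∇ψ*(z_0) ∈ rel int X, μ ≤ L, A_k = Σ_{i=0}^k a_i, (a_k/A_k)² = cμ/(L H_k) for some c ∈ (0,1], and H_k = A_k^λ with λ ∈ [0,1]. Then y_k ∈ X for all k ≥ 0. -/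
/-!
Write `θ k = a k / A k` (so `θ 0 = 1`) and let `gs` play the role of `∇ψ*`. By induction,
`y k = (1 - θ k) • u + θ k • gs (z k)` for some `u ∈ X`: one step of the method replaces `u`
by a combination of `u` and `gs (z k)` whose weight lies in `[0, 1]` precisely because
`θ (k + 1) ≤ θ k`. That monotonicity holds since `θ k ^ 2 * H k = c μ / L` is constant while
`H k = A k ^ λ` is nondecreasing.
-/

open Finset

/-- In the method, `r = H (k - 1) / H k`, `θ = θ k`, `θ' = θ (k - 1)`, `w = gs (z (k - 1))` and
`w' = gs (z k)`. -/
theorem Convex.exists_step_mem {E : Type*} [AddCommGroup E] [Module ℝ E] {X : Set E}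
    (hX : Convex ℝ X) {u w : E} (hu : u ∈ X) (hw : w ∈ X) (w' : E) {r θ θ' : ℝ}
    (hr : 0 ≤ r) (hθ : 0 < θ) (hθ1 : θ < 1) (hθθ' : θ ≤ θ') (hθ'1 : θ' ≤ 1) :
    ∃ u' ∈ X, (r / (r + θ)) • ((1 - θ') • u + θ' • w) + (θ / (r + θ)) • w + θ • (w' - w) =
      (1 - θ) • u' + θ • w' := by
  have hrθ : 0 < r + θ := by linarith
  have h1θ : 0 < 1 - θ := by linarith
  obtain ⟨α, hα⟩ : ∃ α, α = r * (1 - θ') / ((r + θ) * (1 - θ)) := ⟨_, rfl⟩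
  have hα0 : 0 ≤ α := hα ▸ div_nonneg (mul_nonneg hr (sub_nonneg.2 hθ'1)) (mul_pos hrθ h1θ).le
  have hα1 : α ≤ 1 := by
    rw [hα, div_le_one (mul_pos hrθ h1θ)]
    nlinarith [mul_nonneg hr (sub_nonneg.2 hθθ')]
  refine ⟨α • u + (1 - α) • w, hX hu hw hα0 (by linarith) (by ring), ?_⟩
  match_scalars
  · rw [hα]
    field_simp
  · rw [hα]
    field_simp
    ring
  · ring

section StepSizes

variable {a A : ℕ → ℝ}

theorem monotone_of_eq_sum_range_succ (hA : ∀ k, A k = ∑ i ∈ range (k + 1), a i)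
    (ha : ∀ k, 0 ≤ a k) : Monotone A :=
  monotone_nat_of_le_succ fun k => by
    rw [hA, hA, sum_range_succ _ (k + 1)]
    linarith [ha (k + 1)]

theorem div_eq_one_of_eq_sum_range_succ (hA : ∀ k, A k = ∑ i ∈ range (k + 1), a i)
    (ha : a 0 ≠ 0) : a 0 / A 0 = 1 := by
  rw [hA, sum_range_one, div_self ha]

theorem div_succ_lt_one_of_eq_sum_range_succ (hA : ∀ k, A k = ∑ i ∈ range (k + 1), a i)
    (hApos : ∀ k, 0 < A k) (k : ℕ) : a (k + 1) / A (k + 1) < 1 := by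
  have hsucc : A (k + 1) = A k + a (k + 1) := by rw [hA, hA, sum_range_succ]
  rw [div_lt_one (hApos _), hsucc]
  linarith [hApos k]

end StepSizes

theorem antitone_of_sq_eq_div_of_monotone {θ H : ℕ → ℝ} {K : ℝ} (hθ : ∀ k, 0 ≤ θ k)
    (hH : ∀ k, 0 < H k) (hHm : Monotone H) (hθH : ∀ k, θ k ^ 2 = K / H k) : Antitone θ := by
  have hK : 0 ≤ K := by
    have h0 := hθH 0
    rw [eq_div_iff (hH 0).ne'] at h0
    rw [← h0]
    exact mul_nonneg (sq_nonneg _) (hH 0).le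
  refine antitone_nat_of_succ_le fun k => ?_
  rw [← pow_le_pow_iff_left₀ (hθ _) (hθ _) two_ne_zero, hθH, hθH]
  exact div_le_div_of_nonneg_left hK (hH k) (hHm k.le_succ)

theorem stmt_10_general {E : Type*} [NormedAddCommGroup E] [NormedSpace ℝ E]
    (X : Set E) (hXconv : Convex ℝ X)
    (gs : (E →L[ℝ] ℝ) → E) (hgsX : ∀ w, gs w ∈ X)
    (a A H : ℕ → ℝ) (lam c μ L : ℝ)
    (hapos : ∀ k, 0 < a k) (hApos : ∀ k, 0 < A k) (hHpos : ∀ k, 0 < H k)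
    (hA : ∀ k, A k = ∑ i ∈ Finset.range (k + 1), a i)
    (hlam : lam ∈ Set.Icc (0 : ℝ) 1) (hH : ∀ k, H k = (A k) ^ lam)
    (hstep : ∀ k, (a k / A k) ^ 2 = c * μ / (L * H k))
    (x y : ℕ → E) (z : ℕ → E →L[ℝ] ℝ)
    (hy0 : y 0 = gs (z 0))
    (hx : ∀ k ≥ 1, x k =
      ((H (k - 1) / H k) / (H (k - 1) / H k + a k / A k)) • y (k - 1)
        + ((a k / A k) / (H (k - 1) / H k + a k / A k)) • gs (z (k - 1)))
    (hy : ∀ k ≥ 1, y k = x k + (a k / A k) • (gs (z k) - gs (z (k - 1)))) :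
    ∀ k, y k ∈ X := by
  have hθpos : ∀ k, 0 < a k / A k := fun k => div_pos (hapos k) (hApos k)
  have hθ0 := div_eq_one_of_eq_sum_range_succ hA (hapos 0).ne'
  have hHmono : Monotone H := fun i j hij => by
    rw [hH, hH]
    exact Real.rpow_le_rpow (hApos i).le (monotone_of_eq_sum_range_succ hA (hapos · |>.le) hij)
      hlam.1
  have hθanti : Antitone (fun k => a k / A k) :=
    antitone_of_sq_eq_div_of_monotone (hθpos · |>.le) hHpos hHmono
      fun k => (hstep k).trans (div_mul_eq_div_div _ _ _)
  have hθle1 : ∀ k, a k / A k ≤ 1 := fun k => hθ0 ▸ hθanti k.zero_le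
  have hform : ∀ k, ∃ u ∈ X, y k = (1 - a k / A k) • u + (a k / A k) • gs (z k) := by
    intro k
    induction k with
    | zero => exact ⟨gs (z 0), hgsX _, by rw [hy0, hθ0, sub_self, zero_smul, one_smul, zero_add]⟩
    | succ k ih =>
      obtain ⟨u, hu, hyk⟩ := ih
      rw [hy (k + 1) k.succ_pos, hx (k + 1) k.succ_pos, Nat.add_sub_cancel, hyk]
      exact hXconv.exists_step_mem hu (hgsX _) _ (div_pos (hHpos k) (hHpos _)).le (hθpos _)
        (div_succ_lt_one_of_eq_sum_range_succ hA hApos k) (hθanti k.le_succ) (hθle1 k)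
  intro k
  obtain ⟨u, hu, hyk⟩ := hform k
  exact hyk ▸ hXconv hu (hgsX _) (sub_nonneg.2 (hθle1 k)) (hθpos k).le (sub_add_cancel _ _)

/-- Feasibility of the GMD_f iterates: for the method
`x_k = θ'-combination of y_{k-1} and ∇ψ*(z_{k-1})`,
`z_k = z_{k-1} - H_k (a_k/A_k) ∇f(x_k)`,
`y_k = x_k + (a_k/A_k)(∇ψ*(z_k) - ∇ψ*(z_{k-1}))`,
with `y₀ = ∇ψ*(z₀) ∈ X`, `μ ≤ L`, `A_k = Σ_{i≤k} a_i`, `(a_k/A_k)² = cμ/(L H_k)` for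
`c ∈ (0,1]`, and `H_k = A_k^λ`, `λ ∈ [0,1]`, all iterates `y_k` remain in the closed
convex set `X` (here `∇ψ*` is encoded as a map `gs` into `X`). -/
theorem stmt_10 {E : Type*} [NormedAddCommGroup E] [NormedSpace ℝ E] [FiniteDimensional ℝ E]
    (X : Set E) (hXc : IsClosed X) (hXconv : Convex ℝ X)
    (f : E → ℝ) (g : E → E →L[ℝ] ℝ) (hdiff : ∀ p ∈ X, HasFDerivAt f (g p) p)
    (gs : (E →L[ℝ] ℝ) → E) (hgsX : ∀ w, gs w ∈ X)
    (a A H : ℕ → ℝ) (lam c μ L : ℝ)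
    (hapos : ∀ k, 0 < a k) (hApos : ∀ k, 0 < A k) (hHpos : ∀ k, 0 < H k)
    (hA : ∀ k, A k = ∑ i ∈ Finset.range (k + 1), a i)
    (hlam : lam ∈ Set.Icc (0 : ℝ) 1) (hH : ∀ k, H k = (A k) ^ lam)
    (hμ : 0 < μ) (hμL : μ ≤ L) (hc : c ∈ Set.Ioc (0 : ℝ) 1)
    (hstep : ∀ k, (a k / A k) ^ 2 = c * μ / (L * H k))
    (x y : ℕ → E) (z : ℕ → E →L[ℝ] ℝ)
    (hy0 : y 0 = gs (z 0))
    (hx : ∀ k ≥ 1, x k =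
      ((H (k - 1) / H k) / (H (k - 1) / H k + a k / A k)) • y (k - 1)
        + ((a k / A k) / (H (k - 1) / H k + a k / A k)) • gs (z (k - 1)))
    (hz : ∀ k ≥ 1, z k = z (k - 1) - (H k * (a k / A k)) • g (x k))
    (hy : ∀ k ≥ 1, y k = x k + (a k / A k) • (gs (z k) - gs (z (k - 1)))) :
    ∀ k, y k ∈ X :=
  stmt_10_general X hXconv gs hgsX a A H lam c μ L hapos hApos hHpos hA hlam hH hstep x y z hy0 hx
    hy
end

section
/- Let C_k = B_k f(y_k) - Σ_{i=0}^k b_i f(y_i) + Σ_{i=0}^k a_i D_{ψ*}(z_k, z_i) and E_k = C_k - C_{k-1}, where a_i, b_i > 0, A_k = Σ_{i=0}^k a_i, B_k = Σ_{i=0}^k b_i. Then for every k ≥ 0: (1/B_k) Σ_{i=0}^k b_i f(y_i) = f(y_0) - Σ_{i=1}^k (1/B_{i-1} - 1/B_i) Σ_{j=0}^{i-1} a_j D_{ψ*}(z_i, z_j) + Σ_{i=1}^k (1/B_{i-1} - 1/B_k) E_i. -/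
/-!
Write `S_k = Σ_{i ≤ k} b_i f(y_i)` and `G_k = Σ_{j < k} a_j D(z_k, z_j)`, so that
`C_k = B_k f(y_k) - S_k + G_k` because `D(z_k, z_k) = 0`. Adding `b_k` to the weights moves the
weighted mean by `S_k / B_k - S_{k-1} / B_{k-1} = (1/B_{k-1} - 1/B_k) (B_k f(y_k) - S_k)`,
which telescopes to `f(y_0) + Σ_{i=1}^k (1/B_{i-1} - 1/B_i) (C_i - G_i)`. Since `C_0 = 0`,
`C_i = Σ_{j=1}^i E_j`, and summation by parts turns `Σ_i (1/B_{i-1} - 1/B_i) C_i` into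
`Σ_j (1/B_{j-1} - 1/B_k) E_j`.
-/

open Finset

theorem Finset.sum_Icc_one_sub_pred {M : Type*} [AddCommGroup M] (g : ℕ → M) (k : ℕ) :
    ∑ i ∈ Icc 1 k, (g i - g (i - 1)) = g k - g 0 := by
  induction k with
  | zero => simp
  | succ k ih =>
    rw [sum_Icc_succ_top (by omega), ih, Nat.add_sub_cancel]
    abel

theorem Finset.sum_Icc_one_sub_pred_mul_partialSum {R : Type*} [CommRing R] (u e : ℕ → R) (k : ℕ) :
    ∑ i ∈ Icc 1 k, (u (i - 1) - u i) * ∑ j ∈ Icc 1 i, e j =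
      ∑ j ∈ Icc 1 k, (u (j - 1) - u k) * e j := by
  induction k with
  | zero => simp
  | succ k ih =>
    have hshift : ∑ j ∈ Icc 1 k, (u (j - 1) - u (k + 1)) * e j =
        ∑ j ∈ Icc 1 k, (u (j - 1) - u k) * e j + (u k - u (k + 1)) * ∑ j ∈ Icc 1 k, e j := by
      rw [mul_sum, ← sum_add_distrib]
      exact sum_congr rfl fun j _ => by ring
    rw [sum_Icc_succ_top (by omega), sum_Icc_succ_top (by omega), sum_Icc_succ_top (by omega),
      ih, hshift, Nat.add_sub_cancel]
    ring

theorem one_div_mul_add_sub_one_div_mul {K : Type*} [Field K] {B β S x : K} (hB : B ≠ 0)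
    (hBβ : B + β ≠ 0) :
    1 / (B + β) * (S + β * x) - 1 / B * S =
      (1 / B - 1 / (B + β)) * ((B + β) * x - (S + β * x)) := by
  field_simp
  ring

theorem weighted_mean_eq_add_sum_Icc {K : Type*} [Field K] {b x B S : ℕ → K}
    (hB : ∀ k, B k = ∑ i ∈ range (k + 1), b i) (hS : ∀ k, S k = ∑ i ∈ range (k + 1), b i * x i)
    (hBne : ∀ k, B k ≠ 0) (k : ℕ) :
    1 / B k * S k = x 0 + ∑ i ∈ Icc 1 k, (1 / B (i - 1) - 1 / B i) * (B i * x i - S i) := by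
  have hstep : ∀ i ∈ Icc 1 k, 1 / B i * S i - 1 / B (i - 1) * S (i - 1) =
      (1 / B (i - 1) - 1 / B i) * (B i * x i - S i) := fun i hi => by
    obtain ⟨i, rfl⟩ := Nat.exists_eq_add_of_le' (mem_Icc.1 hi).1
    have hBsucc : B (i + 1) = B i + b (i + 1) := by rw [hB, hB, sum_range_succ]
    have hSsucc : S (i + 1) = S i + b (i + 1) * x (i + 1) := by rw [hS, hS, sum_range_succ]
    rw [Nat.add_sub_cancel, hBsucc, hSsucc]
    exact one_div_mul_add_sub_one_div_mul (hBne i) (hBsucc ▸ hBne (i + 1))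
  have hmean0 : 1 / B 0 * S 0 = x 0 := by
    have hb0 : b 0 ≠ 0 := by simpa [hB] using hBne 0
    rw [hS, hB, zero_add, sum_range_one, sum_range_one]
    field_simp
  rw [← sum_congr rfl hstep, sum_Icc_one_sub_pred (fun i => 1 / B i * S i), hmean0]
  ring

theorem stmt_13_general {E F : Type*}
    (f : E → ℝ) (y : ℕ → E) (z : ℕ → F)
    (D : F → F → ℝ) (hD0 : ∀ w, D w w = 0)
    (a b B : ℕ → ℝ)
    (hbpos : ∀ i, 0 < b i)
    (hB : ∀ k, B k = ∑ i ∈ Finset.range (k + 1), b i)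
    (C Err : ℕ → ℝ)
    (hC : ∀ k, C k = B k * f (y k) - ∑ i ∈ Finset.range (k + 1), b i * f (y i)
      + ∑ i ∈ Finset.range (k + 1), a i * D (z k) (z i))
    (hErr : ∀ k ≥ 1, Err k = C k - C (k - 1)) :
    ∀ k, (1 / B k) * ∑ i ∈ Finset.range (k + 1), b i * f (y i) =
      f (y 0)
      - ∑ i ∈ Finset.Icc 1 k,
          (1 / B (i - 1) - 1 / B i) * ∑ j ∈ Finset.range i, a j * D (z i) (z j)
      + ∑ i ∈ Finset.Icc 1 k, (1 / B (i - 1) - 1 / B k) * Err i := by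
  intro k
  obtain ⟨S, hS⟩ : ∃ S : ℕ → ℝ, ∀ k, S k = ∑ i ∈ range (k + 1), b i * f (y i) :=
    ⟨_, fun _ => rfl⟩
  obtain ⟨G, hG⟩ : ∃ G : ℕ → ℝ, ∀ k, G k = ∑ j ∈ range k, a j * D (z k) (z j) :=
    ⟨_, fun _ => rfl⟩
  have hBne : ∀ k, B k ≠ 0 := fun k =>
    (hB k ▸ sum_pos (fun i _ => hbpos i) nonempty_range_add_one).ne'
  have hCG : ∀ k, C k = B k * f (y k) - S k + G k := fun k => by
    rw [hC k, hS, hG, sum_range_succ (fun i => a i * D (z k) (z i)), hD0, mul_zero, add_zero]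
  have hC0 : C 0 = 0 := by
    rw [hCG, hS, hG, hB, zero_add, sum_range_one, sum_range_one, sum_range_zero]
    ring
  have hCErr : ∀ i, C i = ∑ j ∈ Icc 1 i, Err j := fun i => by
    rw [sum_congr rfl fun j hj => hErr j (mem_Icc.1 hj).1, sum_Icc_one_sub_pred, hC0, sub_zero]
  have hCG' : ∀ i, B i * f (y i) - S i = C i - G i := fun i => by rw [hCG]; ring
  rw [← hS, weighted_mean_eq_add_sum_Icc hB hS hBne k]
  simp_rw [hCG', mul_sub, sum_sub_distrib, hCErr, hG]
  rw [sum_Icc_one_sub_pred_mul_partialSum (fun i => 1 / B i)]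
  ring

/-- Structural lemma: with `C_k = B_k f(y_k) - Σ_{i=0}^k b_i f(y_i) + Σ_{i=0}^k a_i D_{ψ*}(z_k, z_i)`
and `E_k = C_k - C_{k-1}`, where `a_i, b_i > 0`, `A_k = Σ_{i≤k} a_i`, `B_k = Σ_{i≤k} b_i`,
one has for every `k ≥ 0`:
`(1/B_k) Σ_{i=0}^k b_i f(y_i) = f(y₀) - Σ_{i=1}^k (1/B_{i-1} - 1/B_i) Σ_{j=0}^{i-1} a_j D_{ψ*}(z_i, z_j) + Σ_{i=1}^k (1/B_{i-1} - 1/B_k) E_i`.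
(`D` is the Bregman divergence of a differentiable convex function on the dual space;
in particular `D w w = 0`.) -/
theorem stmt_13 {E F : Type*} [NormedAddCommGroup E] [NormedAddCommGroup F]
    (f : E → ℝ) (y : ℕ → E) (z : ℕ → F)
    (D : F → F → ℝ) (hD0 : ∀ w, D w w = 0)
    (a b A B : ℕ → ℝ)
    (hapos : ∀ i, 0 < a i) (hbpos : ∀ i, 0 < b i)
    (hA : ∀ k, A k = ∑ i ∈ Finset.range (k + 1), a i)
    (hB : ∀ k, B k = ∑ i ∈ Finset.range (k + 1), b i)
    (C Err : ℕ → ℝ)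
    (hC : ∀ k, C k = B k * f (y k) - ∑ i ∈ Finset.range (k + 1), b i * f (y i)
      + ∑ i ∈ Finset.range (k + 1), a i * D (z k) (z i))
    (hErr : ∀ k ≥ 1, Err k = C k - C (k - 1)) :
    ∀ k, (1 / B k) * ∑ i ∈ Finset.range (k + 1), b i * f (y i) =
      f (y 0)
      - ∑ i ∈ Finset.Icc 1 k,
          (1 / B (i - 1) - 1 / B i) * ∑ j ∈ Finset.range i, a j * D (z i) (z j)
      + ∑ i ∈ Finset.Icc 1 k, (1 / B (i - 1) - 1 / B k) * Err i :=
  stmt_13_general f y z D hD0 a b B hbpos hB C Err hC hErr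
end

section
/- Let x_k, y_k, z_k evolve by the GMD iteration x_k = (A_{k-1}/A_k)y_{k-1} + (a_k/A_k)∇ψ*(z_{k-1}), z_k = z_{k-1} - (a_k/A_k)H_k∇f(x_k), y_k = x_k + (a_k/A_k)(∇ψ*(z_k) - ∇ψ*(z_{k-1})), started with x_0 = y_0 = ∇ψ*(z_0) and ψ μ-strongly convex. Then (1/2)‖x_k - y_{k-1}‖² ≤ (1/μ)·(a_k²/(A_k² A_{k-1}))·Σ_{i=0}^{k-2} a_i D_{ψ*}(z_{k-1}, z_i). -/
/-!
Unrolling the recursion shows that `y_k` is the `a`-weighted average of the points `∇ψ*(z_i)`,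
`i ≤ k`, so `x_k - y_{k-1}` is a multiple of the average of the differences
`∇ψ*(z_{k-1}) - ∇ψ*(z_i)`. Jensen's inequality for `‖·‖²` bounds its square by the weighted
average of `‖∇ψ*(z_{k-1}) - ∇ψ*(z_i)‖²`, and `μ`-strong convexity of `ψ` bounds each of these by
`(2/μ) D_{ψ*}(z_{k-1}, z_i)`.
-/

open Finset

section Averaging

variable {E : Type*} [NormedAddCommGroup E] [NormedSpace ℝ E]

theorem norm_sum_smul_sq_le {ι : Type*} (s : Finset ι) {w : ι → ℝ} (hw : ∀ i ∈ s, 0 ≤ w i)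
    (v : ι → E) :
    ‖∑ i ∈ s, w i • v i‖ ^ 2 ≤ (∑ i ∈ s, w i) * ∑ i ∈ s, w i * ‖v i‖ ^ 2 := by
  have htriangle : ‖∑ i ∈ s, w i • v i‖ ≤ ∑ i ∈ s, w i * ‖v i‖ := by
    refine (norm_sum_le _ _).trans (sum_le_sum fun i hi => ?_)
    rw [norm_smul, Real.norm_of_nonneg (hw i hi)]
  calc ‖∑ i ∈ s, w i • v i‖ ^ 2 ≤ (∑ i ∈ s, w i * ‖v i‖) ^ 2 := by gcongr
    _ ≤ (∑ i ∈ s, w i) * ∑ i ∈ s, w i * ‖v i‖ ^ 2 :=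
      sum_sq_le_sum_mul_sum_of_sq_le_mul s hw
        (fun i hi => mul_nonneg (hw i hi) (sq_nonneg _)) (fun i _ => le_of_eq (by ring))

variable {a A : ℕ → ℝ} {u x y : ℕ → E}

theorem gmd_smul_eq_sum (hApos : ∀ i, 0 < A i) (hA : ∀ k, A k = ∑ i ∈ range (k + 1), a i)
    (hy0 : y 0 = u 0)
    (hx : ∀ k ≥ 1, x k = (A (k - 1) / A k) • y (k - 1) + (a k / A k) • u (k - 1))
    (hy : ∀ k ≥ 1, y k = x k + (a k / A k) • (u k - u (k - 1))) (m : ℕ) :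
    A m • y m = ∑ i ∈ range (m + 1), a i • u i := by
  induction m with
  | zero => simp [hy0, hA 0]
  | succ n ih =>
    have hA1 : A (n + 1) ≠ 0 := (hApos _).ne'
    have hcancel : ∀ (c : ℝ) (v : E), A (n + 1) • ((c / A (n + 1)) • v) = c • v := fun c v => by
      rw [smul_smul, mul_div_cancel₀ _ hA1]
    rw [sum_range_succ, ← ih, hy (n + 1) (by omega), hx (n + 1) (by omega), Nat.add_sub_cancel,
      smul_add, smul_add, hcancel, hcancel, hcancel, smul_sub]
    abel

theorem gmd_sub_eq_smul_sum (hApos : ∀ i, 0 < A i) (hA : ∀ k, A k = ∑ i ∈ range (k + 1), a i)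
    (hy0 : y 0 = u 0)
    (hx : ∀ k ≥ 1, x k = (A (k - 1) / A k) • y (k - 1) + (a k / A k) • u (k - 1))
    (hy : ∀ k ≥ 1, y k = x k + (a k / A k) • (u k - u (k - 1))) (m : ℕ) :
    x (m + 1) - y m =
      (a (m + 1) / (A (m + 1) * A m)) • ∑ i ∈ range (m + 1), a i • (u m - u i) := by
  have hAm : A m ≠ 0 := (hApos m).ne'
  have hAm1 : A (m + 1) ≠ 0 := (hApos _).ne'
  have hAsucc : A (m + 1) = A m + a (m + 1) := by rw [hA, hA m, sum_range_succ]
  have hsum : ∑ i ∈ range (m + 1), a i • (u m - u i) = A m • (u m - y m) := by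
    simp only [smul_sub, sum_sub_distrib, ← sum_smul, ← hA m,
      gmd_smul_eq_sum hApos hA hy0 hx hy m]
  have hcoef : a (m + 1) / (A (m + 1) * A m) * A m = a (m + 1) / A (m + 1) := by field_simp
  have hweight : A m / A (m + 1) = 1 - a (m + 1) / A (m + 1) := by field_simp; linarith
  rw [hsum, smul_smul, hcoef, hx (m + 1) (by omega), Nat.add_sub_cancel, hweight, sub_smul,
    one_smul, smul_sub]
  abel

end Averaging

section ConvexConjugate

variable {E : Type*} [NormedAddCommGroup E] [NormedSpace ℝ E] {ψ : E → ℝ}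

theorem hasFDerivAt_eq_of_forall_sub_le {ψ' w : E →L[ℝ] ℝ} {q : E} (hψ : HasFDerivAt ψ ψ' q)
    (hmax : ∀ p, w p - ψ p ≤ w q - ψ q) : ψ' = w := by
  have hcrit := IsLocalMax.hasFDerivAt_eq_zero (Filter.Eventually.of_forall hmax)
    (w.hasFDerivAt.sub hψ)
  rwa [sub_eq_zero, eq_comm] at hcrit

theorem half_mul_sq_norm_sub_le_bregman {μ : ℝ} {gψ : E → E →L[ℝ] ℝ}
    (hψdiff : ∀ p, HasFDerivAt ψ (gψ p) p)
    (hψsc : ∀ p q, ψ q ≥ ψ p + gψ p (q - p) + μ / 2 * ‖q - p‖ ^ 2)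
    {ψs : (E →L[ℝ] ℝ) → ℝ} {gs : (E →L[ℝ] ℝ) → E}
    (hψs : ∀ w, ψs w = w (gs w) - ψ (gs w))
    (hargmax : ∀ w, ∀ p, w p - ψ p ≤ w (gs w) - ψ (gs w)) (w w' : E →L[ℝ] ℝ) :
    μ / 2 * ‖gs w - gs w'‖ ^ 2 ≤ ψs w - ψs w' - (w - w') (gs w') := by
  have hsc := hψsc (gs w) (gs w')
  rw [hasFDerivAt_eq_of_forall_sub_le (hψdiff (gs w)) (hargmax w), norm_sub_rev] at hsc
  simp only [hψs, sub_apply, map_sub] at hsc ⊢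
  linarith

end ConvexConjugate

theorem stmt_15_general {E : Type*} [NormedAddCommGroup E] [NormedSpace ℝ E]
    (μ : ℝ) (hμ : 0 < μ)
    (ψ : E → ℝ) (gψ : E → E →L[ℝ] ℝ) (hψdiff : ∀ p, HasFDerivAt ψ (gψ p) p)
    (hψsc : ∀ p q, ψ q ≥ ψ p + gψ p (q - p) + μ / 2 * ‖q - p‖ ^ 2)
    (ψs : (E →L[ℝ] ℝ) → ℝ) (gs : (E →L[ℝ] ℝ) → E)
    (hψs : ∀ w, ψs w = w (gs w) - ψ (gs w))
    (hargmax : ∀ w, ∀ p, w p - ψ p ≤ w (gs w) - ψ (gs w))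
    (a A : ℕ → ℝ)
    (hapos : ∀ i, 0 < a i) (hApos : ∀ i, 0 < A i)
    (hA : ∀ k, A k = ∑ i ∈ Finset.range (k + 1), a i)
    (x y : ℕ → E) (z : ℕ → E →L[ℝ] ℝ)
    (hy0 : y 0 = gs (z 0))
    (hx : ∀ k ≥ 1, x k = (A (k - 1) / A k) • y (k - 1) + (a k / A k) • gs (z (k - 1)))
    (hy : ∀ k ≥ 1, y k = x k + (a k / A k) • (gs (z k) - gs (z (k - 1)))) :
    ∀ k ≥ 1,
      (1 / 2) * ‖x k - y (k - 1)‖ ^ 2 ≤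
        (1 / μ) * ((a k) ^ 2 / ((A k) ^ 2 * A (k - 1))) *
          ∑ i ∈ Finset.range (k - 1),
            a i * (ψs (z (k - 1)) - ψs (z i) - (z (k - 1) - z i) (gs (z i))) := by
  intro k hk
  obtain ⟨m, rfl⟩ := Nat.exists_eq_add_of_le' hk
  rw [Nat.add_sub_cancel, gmd_sub_eq_smul_sum hApos hA hy0 hx hy m]
  set c := a (m + 1) / (A (m + 1) * A m)
  set d := fun i => ‖gs (z m) - gs (z i)‖ ^ 2
  have hc : 0 ≤ c := div_nonneg (hapos _).le (mul_pos (hApos _) (hApos _)).le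
  have hbregman := half_mul_sq_norm_sub_le_bregman hψdiff hψsc hψs hargmax (z m)
  calc (1 / 2) * ‖c • ∑ i ∈ range (m + 1), a i • (gs (z m) - gs (z i))‖ ^ 2
      ≤ (1 / 2) * (c ^ 2 * (A m * ∑ i ∈ range (m + 1), a i * d i)) := by
        rw [norm_smul, Real.norm_of_nonneg hc, mul_pow, hA m]
        gcongr
        exact norm_sum_smul_sq_le _ (fun i _ => (hapos i).le) _
    _ = (1 / 2) * (c ^ 2 * (A m * ∑ i ∈ range m, a i * d i)) := by
        simp [d, sum_range_succ]
    _ ≤ (1 / 2) * (c ^ 2 * (A m * ∑ i ∈ range m,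
          a i * (2 / μ * (ψs (z m) - ψs (z i) - (z m - z i) (gs (z i)))))) := by
        gcongr with i
        · exact (hApos m).le
        · exact (hapos i).le
        · show ‖gs (z m) - gs (z i)‖ ^ 2 ≤ _
          rw [div_mul_eq_mul_div, le_div_iff₀ hμ]
          linarith [hbregman (z i)]
    _ = _ := by
        simp only [c, mul_left_comm _ (2 / μ), ← mul_sum]
        field_simp

/-- For the GMD iteration `x_k = (A_{k-1}/A_k)y_{k-1} + (a_k/A_k)∇ψ*(z_{k-1})`,
`z_k = z_{k-1} - (a_k/A_k)H_k∇f(x_k)`, `y_k = x_k + (a_k/A_k)(∇ψ*(z_k) - ∇ψ*(z_{k-1}))`,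
started with `x₀ = y₀ = ∇ψ*(z₀)` and `ψ` `μ`-strongly convex, one has for every `k ≥ 1`:
`(1/2)‖x_k - y_{k-1}‖² ≤ (1/μ)(a_k²/(A_k² A_{k-1})) Σ_{i=0}^{k-2} a_i D_{ψ*}(z_{k-1}, z_i)`,
where `D_{ψ*}(w, w') = ψ*(w) - ψ*(w') - ⟨w - w', ∇ψ*(w')⟩`. -/
theorem stmt_15 {E : Type*} [NormedAddCommGroup E] [NormedSpace ℝ E] [FiniteDimensional ℝ E]
    (μ : ℝ) (hμ : 0 < μ)
    (f : E → ℝ) (g : E → E →L[ℝ] ℝ) (hdiff : ∀ p, HasFDerivAt f (g p) p)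
    (ψ : E → ℝ) (gψ : E → E →L[ℝ] ℝ) (hψdiff : ∀ p, HasFDerivAt ψ (gψ p) p)
    (hψsc : ∀ p q, ψ q ≥ ψ p + gψ p (q - p) + μ / 2 * ‖q - p‖ ^ 2)
    (ψs : (E →L[ℝ] ℝ) → ℝ) (gs : (E →L[ℝ] ℝ) → E)
    (hψs : ∀ w, ψs w = w (gs w) - ψ (gs w))
    (hargmax : ∀ w, ∀ p, w p - ψ p ≤ w (gs w) - ψ (gs w))
    (a A H : ℕ → ℝ)
    (hapos : ∀ i, 0 < a i) (hApos : ∀ i, 0 < A i) (hHpos : ∀ i, 0 < H i)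
    (hA : ∀ k, A k = ∑ i ∈ Finset.range (k + 1), a i)
    (x y : ℕ → E) (z : ℕ → E →L[ℝ] ℝ)
    (hx0 : x 0 = gs (z 0)) (hy0 : y 0 = gs (z 0))
    (hx : ∀ k ≥ 1, x k = (A (k - 1) / A k) • y (k - 1) + (a k / A k) • gs (z (k - 1)))
    (hz : ∀ k ≥ 1, z k = z (k - 1) - ((a k / A k) * H k) • g (x k))
    (hy : ∀ k ≥ 1, y k = x k + (a k / A k) • (gs (z k) - gs (z (k - 1)))) :
    ∀ k ≥ 1,
      (1 / 2) * ‖x k - y (k - 1)‖ ^ 2 ≤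
        (1 / μ) * ((a k) ^ 2 / ((A k) ^ 2 * A (k - 1))) *
          ∑ i ∈ Finset.range (k - 1),
            a i * (ψs (z (k - 1)) - ψs (z i) - (z (k - 1) - z i) (gs (z i))) :=
  stmt_15_general μ hμ ψ gψ hψdiff hψsc ψs gs hψs hargmax a A hapos hApos hA x y z hy0 hx hy
end

section
/- Let C_k = B_k f(y_k) - Σ_{i=0}^k b_i f(y_i) + Σ_{i=0}^k a_i D_{ψ*}(z_k, z_i) with a_i, b_i > 0, A_k = Σa_i, B_k = Σb_i, B_{k-1} = H_k A_{k-1}, and let x_k, y_k, z_k follow GMD with x_0 = y_0 = ∇ψ*(z_0), ψ μ-strongly convex, f L-smooth and ε_H-weakly convex with ε_H ∈ [0, L], and (a_k/A_k)² = cμ/(L H_k) for c ∈ [0,1]. Then the discretization error E_k = C_k - C_{k-1} satisfies E_k ≤ -(1-c)A_{k-1}D_{ψ*}(z_{k-1}, z_k) + B_{k-1}(ε_H/2)‖x_k - y_{k-1}‖². -/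
/-!
The Bregman three-point identity, together with `A_{k-1} y_{k-1} = Σ_{i<k} a_i ∇ψ*(z_i)`, turns
the change of the dual part of the potential into
`A_{k-1} D(z_k, z_{k-1}) - B_{k-1} ⟨∇f(x_k), x_k - y_{k-1}⟩`. Smoothness at `x_k` bounds `f(y_k)`
from above and weak convexity bounds `f(y_{k-1})` from below. The resulting term
`B_{k-1} ⟨∇f(x_k), y_k - x_k⟩` is `-A_{k-1}` times the symmetrized divergence of `z_{k-1}, z_k`,
and by the step-size rule the smoothness term equals
`c A_{k-1} (μ/2) ‖∇ψ*(z_k) - ∇ψ*(z_{k-1})‖²`, which strong convexity of `ψ` bounds by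
`c A_{k-1} D(z_{k-1}, z_k)`.
-/

open Finset

theorem potential_succ_sub {a b B F C : ℕ → ℝ} {K : ℕ → ℕ → ℝ}
    (hB : ∀ k, B k = ∑ i ∈ range (k + 1), b i) (hK : ∀ k, K k k = 0)
    (hC : ∀ k, C k = B k * F k - ∑ i ∈ range (k + 1), b i * F i
      + ∑ i ∈ range (k + 1), a i * K k i) (n : ℕ) :
    C (n + 1) - C n =
      B n * (F (n + 1) - F n) + ∑ i ∈ range (n + 1), a i * (K (n + 1) i - K n i) := by
  rw [hC, hC, sum_range_succ (fun i => b i * F i), sum_range_succ (fun i => a i * K (n + 1) i),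
    hK, hB (n + 1), sum_range_succ, ← hB n]
  simp only [mul_sub, sum_sub_distrib]
  ring

section

variable {E : Type*} [NormedAddCommGroup E] [NormedSpace ℝ E]

theorem le_add_fderiv_add_sq_of_lipschitz_fderiv {L : ℝ} {f : E → ℝ} {g : E → E →L[ℝ] ℝ}
    (hdiff : ∀ p, HasFDerivAt f (g p) p) (hlip : ∀ p q, ‖g p - g q‖ ≤ L * ‖p - q‖) (p q : E) :
    f q ≤ f p + g p (q - p) + L / 2 * ‖q - p‖ ^ 2 := by
  set v := q - p
  set φ : ℝ → ℝ := fun t => f (p + t • v) - t * g p v - L / 2 * ‖v‖ ^ 2 * t ^ 2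
  have hφ : ∀ t, HasDerivAt φ (g (p + t • v) v - g p v - L / 2 * ‖v‖ ^ 2 * (2 * t)) t := by
    intro t
    have hline : HasDerivAt (fun t : ℝ => p + t • v) v t := by
      simpa using ((hasDerivAt_id t).smul_const v).const_add p
    have hquad := (hasDerivAt_pow 2 t).const_mul (L / 2 * ‖v‖ ^ 2)
    simp only [Nat.cast_ofNat] at hquad
    exact (((hdiff _).comp_hasDerivAt t hline).sub ((hasDerivAt_id t).mul_const (g p v))).sub
      hquad |>.congr_deriv (by simp)
  have hφ' : ∀ t ∈ interior (Set.Ici (0 : ℝ)),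
      g (p + t • v) v - g p v - L / 2 * ‖v‖ ^ 2 * (2 * t) ≤ 0 := by
    intro t ht
    rw [interior_Ici, Set.mem_Ioi] at ht
    have hnorm : ‖g (p + t • v) - g p‖ * ‖v‖ ≤ L * (t * ‖v‖) * ‖v‖ := by
      gcongr
      simpa [norm_smul, abs_of_pos ht] using hlip (p + t • v) p
    have happly :=
      (le_abs_self ((g (p + t • v) - g p) v)).trans ((g (p + t • v) - g p).le_opNorm v)
    simp only [sub_apply] at happly
    nlinarith
  have hanti : AntitoneOn φ (Set.Ici 0) :=
    antitoneOn_of_hasDerivWithinAt_nonpos (convex_Ici 0)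
      (fun t _ => (hφ t).continuousAt.continuousWithinAt) (fun t _ => (hφ t).hasDerivWithinAt) hφ'
  have h01 : φ 1 ≤ φ 0 := hanti Set.self_mem_Ici (Set.mem_Ici.2 zero_le_one) zero_le_one
  simp only [φ, v, one_smul, zero_smul, add_zero, one_mul, zero_mul, sub_zero, one_pow, mul_one,
    add_sub_cancel, ne_eq, OfNat.ofNat_ne_zero, not_false_eq_true, zero_pow] at h01
  linarith

theorem fderiv_eq_of_isMaxOn_sub {ψ : E → ℝ} {gψ : E → E →L[ℝ] ℝ}
    (hψdiff : ∀ p, HasFDerivAt ψ (gψ p) p) {w : E →L[ℝ] ℝ} {p : E}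
    (hmax : IsMaxOn (fun q => w q - ψ q) Set.univ p) : gψ p = w := by
  have hloc : IsLocalMax (fun q => w q - ψ q) p := hmax.isLocalMax Filter.univ_mem
  exact (sub_eq_zero.mp (hloc.hasFDerivAt_eq_zero (w.hasFDerivAt.sub (hψdiff p)))).symm

variable {ψs : (E →L[ℝ] ℝ) → ℝ} {gs : (E →L[ℝ] ℝ) → E} {D : (E →L[ℝ] ℝ) → (E →L[ℝ] ℝ) → ℝ}

theorem bregman_self (hD : ∀ w w', D w w' = ψs w - ψs w' - (w - w') (gs w')) (w : E →L[ℝ] ℝ) :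
    D w w = 0 := by
  simp [hD]

theorem bregman_sub_bregman (hD : ∀ w w', D w w' = ψs w - ψs w' - (w - w') (gs w'))
    (w₁ w₂ w : E →L[ℝ] ℝ) :
    D w₂ w - D w₁ w = D w₂ w₁ + (w₂ - w₁) (gs w₁ - gs w) := by
  simp only [hD, map_sub, sub_apply]
  ring

theorem bregman_add_bregman_swap (hD : ∀ w w', D w w' = ψs w - ψs w' - (w - w') (gs w'))
    (w₁ w₂ : E →L[ℝ] ℝ) :
    D w₂ w₁ + D w₁ w₂ = (w₂ - w₁) (gs w₂ - gs w₁) := by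
  have h := bregman_sub_bregman hD w₁ w₂ w₂
  rw [bregman_self hD, ← neg_sub (gs w₂), map_neg] at h
  linarith

theorem sum_bregman_sub_bregman (hD : ∀ w w', D w w' = ψs w - ψs w' - (w - w') (gs w'))
    {ι : Type*} (s : Finset ι) (a : ι → ℝ) (w : ι → E →L[ℝ] ℝ) (w₁ w₂ : E →L[ℝ] ℝ) :
    ∑ i ∈ s, a i * (D w₂ (w i) - D w₁ (w i)) =
      (∑ i ∈ s, a i) * D w₂ w₁ + (w₂ - w₁) ((∑ i ∈ s, a i) • gs w₁ - ∑ i ∈ s, a i • gs (w i)) := by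
  simp only [bregman_sub_bregman hD, map_sub, map_sum, map_smul, smul_eq_mul, mul_add, mul_sub,
    sum_add_distrib, sum_sub_distrib, sum_mul]

theorem half_mul_sq_norm_le_bregman {μ : ℝ} {ψ : E → ℝ} {gψ : E → E →L[ℝ] ℝ}
    (hψdiff : ∀ p, HasFDerivAt ψ (gψ p) p)
    (hψsc : ∀ p q, ψ q ≥ ψ p + gψ p (q - p) + μ / 2 * ‖q - p‖ ^ 2)
    (hψs : ∀ w, ψs w = w (gs w) - ψ (gs w))
    (hargmax : ∀ w, ∀ p, w p - ψ p ≤ w (gs w) - ψ (gs w))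
    (hD : ∀ w w', D w w' = ψs w - ψs w' - (w - w') (gs w')) (w w' : E →L[ℝ] ℝ) :
    μ / 2 * ‖gs w' - gs w‖ ^ 2 ≤ D w w' := by
  have hsc := hψsc (gs w) (gs w')
  rw [fderiv_eq_of_isMaxOn_sub hψdiff fun q _ => hargmax w q, map_sub] at hsc
  rw [hD, hψs, hψs, sub_apply]
  linarith

theorem sum_smul_eq_smul_of_gmd {a A : ℕ → ℝ} {u x y : ℕ → E}
    (hA₀ : A 0 = a 0) (hA_ne : ∀ k, A (k + 1) ≠ 0) (hy0 : y 0 = u 0)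
    (hx : ∀ k, x (k + 1) = (A k / A (k + 1)) • y k + (a (k + 1) / A (k + 1)) • u k)
    (hy : ∀ k, y (k + 1) = x (k + 1) + (a (k + 1) / A (k + 1)) • (u (k + 1) - u k)) (m : ℕ) :
    ∑ i ∈ range (m + 1), a i • u i = A m • y m := by
  induction m with
  | zero => simp [hA₀, hy0]
  | succ m ih =>
    have := hA_ne m
    rw [sum_range_succ, ih, hy, hx]
    match_scalars <;> field_simp
    ring

theorem gmd_step_le {μ L εH c α τ H : ℝ} {f : E → ℝ} {g : E → E →L[ℝ] ℝ}
    (hdiff : ∀ p, HasFDerivAt f (g p) p) (hfsmooth : ∀ p q, ‖g p - g q‖ ≤ L * ‖p - q‖)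
    (hfweak : ∀ p q, f q ≥ f p + g p (q - p) - εH / 2 * ‖q - p‖ ^ 2)
    (hD : ∀ w w', D w w' = ψs w - ψs w' - (w - w') (gs w'))
    (hDlb : ∀ w w', μ / 2 * ‖gs w' - gs w‖ ^ 2 ≤ D w w')
    (hL : L ≠ 0) (hc : 0 ≤ c) (hα : 0 ≤ α) (hH : 0 < H) (hτ : τ ^ 2 = c * μ / (L * H))
    {x y y' : E} {w w' : E →L[ℝ] ℝ}
    (hx : x - y = τ • (gs w - y)) (hw : w' = w - (τ * H) • g x)
    (hy : y' - x = τ • (gs w' - gs w)) :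
    H * α * (f y' - f y) + (α * D w' w + (w' - w) (α • gs w - α • y)) ≤
      -(1 - c) * α * D w w' + H * α * (εH / 2) * ‖x - y‖ ^ 2 := by
  have hw' : w' - w = -((τ * H) • g x) := by rw [hw]; abel
  have hvalue : f y' - f y ≤
      g x (y' - x) + g x (x - y) + L / 2 * ‖y' - x‖ ^ 2 + εH / 2 * ‖x - y‖ ^ 2 := by
    have hsmooth := le_add_fderiv_add_sq_of_lipschitz_fderiv hdiff hfsmooth x y'
    have hweak := hfweak x y
    rw [← neg_sub x y, map_neg, norm_neg] at hweak
    linarith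
  have hdual : (w' - w) (α • gs w - α • y) = -(H * α * g x (x - y)) := by
    rw [hw', ← smul_sub, hx]
    simp only [neg_apply, smul_apply, map_smul, smul_eq_mul]
    ring
  have hlinear : H * α * g x (y' - x) = -(α * (D w' w + D w w')) := by
    rw [bregman_add_bregman_swap hD, hw', hy]
    simp only [neg_apply, smul_apply, map_smul, smul_eq_mul]
    ring
  have hquad : H * α * (L / 2 * ‖y' - x‖ ^ 2) ≤ c * α * D w w' :=
    calc H * α * (L / 2 * ‖y' - x‖ ^ 2) = c * α * (μ / 2 * ‖gs w' - gs w‖ ^ 2) := by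
          rw [hy, norm_smul, mul_pow, Real.norm_eq_abs, sq_abs, hτ]
          field_simp
      _ ≤ c * α * D w w' := by gcongr; exact hDlb w w'
  have := mul_le_mul_of_nonneg_left hvalue (by positivity : 0 ≤ H * α)
  linarith

end

theorem stmt_16_general {E : Type*} [NormedAddCommGroup E] [NormedSpace ℝ E]
    (μ L εH c : ℝ) (hL : 0 < L)
    (hc : c ∈ Set.Icc (0 : ℝ) 1)
    (f : E → ℝ) (g : E → E →L[ℝ] ℝ) (hdiff : ∀ p, HasFDerivAt f (g p) p)
    (hfsmooth : ∀ p q, ‖g p - g q‖ ≤ L * ‖p - q‖)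
    (hfweak : ∀ p q, f q ≥ f p + g p (q - p) - εH / 2 * ‖q - p‖ ^ 2)
    (ψ : E → ℝ) (gψ : E → E →L[ℝ] ℝ) (hψdiff : ∀ p, HasFDerivAt ψ (gψ p) p)
    (hψsc : ∀ p q, ψ q ≥ ψ p + gψ p (q - p) + μ / 2 * ‖q - p‖ ^ 2)
    (ψs : (E →L[ℝ] ℝ) → ℝ) (gs : (E →L[ℝ] ℝ) → E)
    (hψs : ∀ w, ψs w = w (gs w) - ψ (gs w))
    (hargmax : ∀ w, ∀ p, w p - ψ p ≤ w (gs w) - ψ (gs w))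
    (D : (E →L[ℝ] ℝ) → (E →L[ℝ] ℝ) → ℝ)
    (hD : ∀ w w', D w w' = ψs w - ψs w' - (w - w') (gs w'))
    (a b A B H : ℕ → ℝ)
    (hApos : ∀ i, 0 < A i) (hHpos : ∀ i, 0 < H i)
    (hA : ∀ k, A k = ∑ i ∈ Finset.range (k + 1), a i)
    (hB : ∀ k, B k = ∑ i ∈ Finset.range (k + 1), b i)
    (hBH : ∀ k ≥ 1, B (k - 1) = H k * A (k - 1))
    (hstep : ∀ k ≥ 1, (a k / A k) ^ 2 = c * μ / (L * H k))
    (x y : ℕ → E) (z : ℕ → E →L[ℝ] ℝ)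
    (hy0 : y 0 = gs (z 0))
    (hx : ∀ k ≥ 1, x k = (A (k - 1) / A k) • y (k - 1) + (a k / A k) • gs (z (k - 1)))
    (hz : ∀ k ≥ 1, z k = z (k - 1) - ((a k / A k) * H k) • g (x k))
    (hy : ∀ k ≥ 1, y k = x k + (a k / A k) • (gs (z k) - gs (z (k - 1))))
    (C : ℕ → ℝ)
    (hC : ∀ k, C k = B k * f (y k) - ∑ i ∈ Finset.range (k + 1), b i * f (y i)
      + ∑ i ∈ Finset.range (k + 1), a i * D (z k) (z i)) :
    ∀ k ≥ 1, C k - C (k - 1) ≤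
      -(1 - c) * A (k - 1) * D (z (k - 1)) (z k)
        + B (k - 1) * (εH / 2) * ‖x k - y (k - 1)‖ ^ 2 := by
  have hx' (n : ℕ) := hx (n + 1) n.succ_pos
  have hy' (n : ℕ) := hy (n + 1) n.succ_pos
  simp only [Nat.add_sub_cancel] at hx' hy'
  have hsum := sum_smul_eq_smul_of_gmd (by simp [hA]) (fun k => (hApos (k + 1)).ne') hy0 hx' hy'
  intro k hk
  obtain ⟨n, rfl⟩ := Nat.exists_eq_add_of_le' hk
  simp only [Nat.add_sub_cancel]
  rw [potential_succ_sub (F := fun i => f (y i)) (K := fun k i => D (z k) (z i)) hB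
    (fun k => bregman_self hD (z k)) hC, sum_bregman_sub_bregman hD, hsum n, ← hA n,
    show B n = H (n + 1) * A n from hBH (n + 1) hk]
  refine gmd_step_le hdiff hfsmooth hfweak hD
    (half_mul_sq_norm_le_bregman hψdiff hψsc hψs hargmax hD) hL.ne' hc.1 (hApos n).le
    (hHpos (n + 1)) (hstep (n + 1) hk) ?_ (hz (n + 1) hk) ?_
  · have hA_succ : A (n + 1) = A n + a (n + 1) := by rw [hA, hA, sum_range_succ]
    have := (hApos (n + 1)).ne'
    rw [hx' n]
    match_scalars <;> field_simp
    linarith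
  · rw [hy' n]; abel

/-- Discretization-error bound for GMD: with `C_k = B_k f(y_k) - Σ_{i=0}^k b_i f(y_i) +
Σ_{i=0}^k a_i D_{ψ*}(z_k, z_i)`, `B_{k-1} = H_k A_{k-1}`, iterates following GMD started at
`x₀ = y₀ = ∇ψ*(z₀)`, `ψ` `μ`-strongly convex, `f` `L`-smooth and `ε_H`-weakly convex with
`ε_H ∈ [0, L]`, and `(a_k/A_k)² = cμ/(L H_k)` with `c ∈ [0,1]`, the error
`E_k = C_k - C_{k-1}` satisfies
`E_k ≤ -(1-c) A_{k-1} D_{ψ*}(z_{k-1}, z_k) + B_{k-1}(ε_H/2)‖x_k - y_{k-1}‖²`. -/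
theorem stmt_16 {E : Type*} [NormedAddCommGroup E] [NormedSpace ℝ E] [FiniteDimensional ℝ E]
    (μ L εH c : ℝ) (hμ : 0 < μ) (hL : 0 < L)
    (hεH : εH ∈ Set.Icc (0 : ℝ) L) (hc : c ∈ Set.Icc (0 : ℝ) 1)
    (f : E → ℝ) (g : E → E →L[ℝ] ℝ) (hdiff : ∀ p, HasFDerivAt f (g p) p)
    (hfsmooth : ∀ p q, ‖g p - g q‖ ≤ L * ‖p - q‖)
    (hfweak : ∀ p q, f q ≥ f p + g p (q - p) - εH / 2 * ‖q - p‖ ^ 2)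
    (ψ : E → ℝ) (gψ : E → E →L[ℝ] ℝ) (hψdiff : ∀ p, HasFDerivAt ψ (gψ p) p)
    (hψsc : ∀ p q, ψ q ≥ ψ p + gψ p (q - p) + μ / 2 * ‖q - p‖ ^ 2)
    (ψs : (E →L[ℝ] ℝ) → ℝ) (gs : (E →L[ℝ] ℝ) → E)
    (hψs : ∀ w, ψs w = w (gs w) - ψ (gs w))
    (hargmax : ∀ w, ∀ p, w p - ψ p ≤ w (gs w) - ψ (gs w))
    (D : (E →L[ℝ] ℝ) → (E →L[ℝ] ℝ) → ℝ)
    (hD : ∀ w w', D w w' = ψs w - ψs w' - (w - w') (gs w'))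
    (a b A B H : ℕ → ℝ)
    (hapos : ∀ i, 0 < a i) (hbpos : ∀ i, 0 < b i)
    (hApos : ∀ i, 0 < A i) (hHpos : ∀ i, 0 < H i)
    (hA : ∀ k, A k = ∑ i ∈ Finset.range (k + 1), a i)
    (hB : ∀ k, B k = ∑ i ∈ Finset.range (k + 1), b i)
    (hBH : ∀ k ≥ 1, B (k - 1) = H k * A (k - 1))
    (hstep : ∀ k ≥ 1, (a k / A k) ^ 2 = c * μ / (L * H k))
    (x y : ℕ → E) (z : ℕ → E →L[ℝ] ℝ)
    (hx0 : x 0 = gs (z 0)) (hy0 : y 0 = gs (z 0))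
    (hx : ∀ k ≥ 1, x k = (A (k - 1) / A k) • y (k - 1) + (a k / A k) • gs (z (k - 1)))
    (hz : ∀ k ≥ 1, z k = z (k - 1) - ((a k / A k) * H k) • g (x k))
    (hy : ∀ k ≥ 1, y k = x k + (a k / A k) • (gs (z k) - gs (z (k - 1))))
    (C : ℕ → ℝ)
    (hC : ∀ k, C k = B k * f (y k) - ∑ i ∈ Finset.range (k + 1), b i * f (y i)
      + ∑ i ∈ Finset.range (k + 1), a i * D (z k) (z i)) :
    ∀ k ≥ 1, C k - C (k - 1) ≤
      -(1 - c) * A (k - 1) * D (z (k - 1)) (z k)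
        + B (k - 1) * (εH / 2) * ‖x k - y (k - 1)‖ ^ 2 :=
  stmt_16_general μ L εH c hL hc f g hdiff hfsmooth hfweak ψ gψ hψdiff hψsc ψs gs hψs hargmax D hD a
    b A B H hApos hHpos hA hB hBH hstep x y z hy0 hx hz hy C hC
end

section
/- Let x_k, y_k, z_k evolve by GMD_B: x_k = y_{k-1} + (a_k/A_k)∇ψ*(z_{k-1}) - (a_k/(A_k A_{k-1}))Σ_{i=0}^{k-1}a_i∇ψ*(z_i); z_k = z_{k-1} - (a_k/A_k)H_k∇f(x_k); y_k = argmin_u {⟨∇f(x_k), u - x_k⟩ + (L/2)‖u - x_k‖²}, with x_0 = y_0 = ∇ψ*(z_0), ψ μ-strongly convex w.r.t. ‖·‖, f L-smooth and ε_H-weakly convex (ε_H ∈ [0,L]), B_{k-1} = H_k A_{k-1}, and (a_k/A_k)² = cμ/(LH_k), c ∈ [0,1]. Then E_k = C_k - C_{k-1} ≤ -(1-c)(B_{k-1}/(2L))‖∇f(x_k)‖_*² + B_{k-1}(ε_H/2)‖x_k - y_{k-1}‖², where C_k = B_k f(y_k) - Σ_{i=0}^k b_i f(y_i) + Σ_{i=0}^k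 a_i D_{ψ*}(z_k, z_i). -/
/-!
The potential difference splits into `B_{k-1} (f(y_k) - f(y_{k-1}))` and the change of the Bregman
sum. By the three-point identity the latter is `A_{k-1} D_{ψ*}(z_k, z_{k-1})` plus
`⟨z_k - z_{k-1}, A_{k-1} ∇ψ*(z_{k-1}) - Σ a_i ∇ψ*(z_i)⟩`, and the `x`-update turns this pairing into
`-B_{k-1} ⟨∇f(x_k), x_k - y_{k-1}⟩`. That cancels the linear term of the weak-convexity bound
`f(x_k) - f(y_{k-1}) ≤ ⟨∇f(x_k), x_k - y_{k-1}⟩ + (ε_H/2)‖x_k - y_{k-1}‖²`; the gradient step gives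
`f(y_k) ≤ f(x_k) - ‖∇f(x_k)‖_*²/(2L)`, and the `(1/μ)`-smoothness of `ψ*` together with the
step-size rule bounds `A_{k-1} D_{ψ*}(z_k, z_{k-1})` by `c B_{k-1} ‖∇f(x_k)‖_*²/(2L)`.
-/

open Filter Finset

section Smooth

variable {E : Type*} [NormedAddCommGroup E] [NormedSpace ℝ E]

theorem image_le_add_apply_sub_add_sq_of_lipschitz_fderiv {f : E → ℝ} {g : E → E →L[ℝ] ℝ}
    {L : ℝ} (hf : ∀ p, HasFDerivAt f (g p) p) (hg : ∀ p q, ‖g p - g q‖ ≤ L * ‖p - q‖)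
    (p q : E) : f q ≤ f p + g p (q - p) + L / 2 * ‖q - p‖ ^ 2 := by
  set v := q - p
  -- `φ' t = L t ‖v‖² - (g (p + t • v) - g p) v ≥ 0` by the Lipschitz bound, so `φ 0 ≤ φ 1`
  let φ : ℝ → ℝ := fun t => L * ‖v‖ ^ 2 * t ^ 2 / 2 + t * g p v - f (p + t • v)
  have hφ : ∀ t, HasDerivAt φ (L * ‖v‖ ^ 2 * t + g p v - g (p + t • v) v) t := by
    intro t
    have hline : HasDerivAt (fun s : ℝ => p + s • v) v t := by
      simpa using ((hasDerivAt_id t).smul_const v).const_add p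
    have hpoly := (((hasDerivAt_pow 2 t).const_mul (L * ‖v‖ ^ 2)).div_const 2).add
      ((hasDerivAt_id t).mul_const (g p v))
    exact (hpoly.sub ((hf _).comp_hasDerivAt t hline)).congr_deriv (by push_cast; ring)
  have hmono : MonotoneOn φ (Set.Icc 0 1) := by
    refine monotoneOn_of_deriv_nonneg (convex_Icc 0 1)
      (fun t _ => (hφ t).continuousAt.continuousWithinAt)
      (fun t _ => (hφ t).differentiableAt.differentiableWithinAt) fun t ht => ?_
    rw [interior_Icc] at ht
    have hdist : ‖t • v‖ = t * ‖v‖ := by simp [norm_smul, abs_of_pos ht.1]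
    have hlip : (g (p + t • v) - g p) v ≤ L * (t * ‖v‖) * ‖v‖ :=
      calc (g (p + t • v) - g p) v ≤ ‖g (p + t • v) - g p‖ * ‖v‖ :=
            (le_abs_self _).trans ((g (p + t • v) - g p).le_opNorm v)
        _ ≤ L * (t * ‖v‖) * ‖v‖ := by
            gcongr
            simpa [hdist] using hg (p + t • v) p
    rw [sub_apply] at hlip
    rw [(hφ t).deriv]
    nlinarith
  have h01 := hmono (Set.left_mem_Icc.2 zero_le_one) (Set.right_mem_Icc.2 zero_le_one) zero_le_one
  simp only [φ, one_smul, zero_smul, add_zero, v, add_sub_cancel] at h01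
  linarith

theorem ContinuousLinearMap.exists_norm_le_one_lt_apply (n : E →L[ℝ] ℝ) {r : ℝ}
    (hr : r < ‖n‖) : ∃ u : E, ‖u‖ ≤ 1 ∧ r < n u := by
  obtain ⟨u, hu, hru⟩ := n.exists_lt_apply_of_lt_opNorm hr
  rcases le_total 0 (n u) with hnu | hnu
  · exact ⟨u, hu.le, by rwa [Real.norm_of_nonneg hnu] at hru⟩
  · exact ⟨-u, by simpa using hu.le, by rwa [Real.norm_of_nonpos hnu, ← map_neg] at hru⟩

theorem apply_sub_add_sq_le_of_forall_le {L : ℝ} (hL : 0 < L) {n : E →L[ℝ] ℝ} {x y : E}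
    (hy : ∀ u, n (y - x) + L / 2 * ‖y - x‖ ^ 2 ≤ n (u - x) + L / 2 * ‖u - x‖ ^ 2) :
    n (y - x) + L / 2 * ‖y - x‖ ^ 2 ≤ -(‖n‖ ^ 2 / (2 * L)) := by
  set m := n (y - x) + L / 2 * ‖y - x‖ ^ 2
  -- compare with the step of length `‖n‖ / L` along a near-maximizer `u` of `n` on the unit ball
  have hbound : ∀ r < ‖n‖, m ≤ -(‖n‖ / L) * r + ‖n‖ ^ 2 / (2 * L) := by
    intro r hr
    obtain ⟨u, hu, hru⟩ := n.exists_norm_le_one_lt_apply hr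
    have hstep := hy (x - (‖n‖ / L) • u)
    rw [sub_sub_cancel_left, map_neg, map_smul, norm_neg, norm_smul,
      Real.norm_of_nonneg (by positivity), smul_eq_mul] at hstep
    have hsq : (‖n‖ / L * ‖u‖) ^ 2 ≤ (‖n‖ / L) ^ 2 := by
      rw [mul_pow]
      exact mul_le_of_le_one_right (sq_nonneg _) (pow_le_one₀ (norm_nonneg u) hu)
    have hlin : ‖n‖ / L * r ≤ ‖n‖ / L * n u := by gcongr
    have hquad : L / 2 * (‖n‖ / L) ^ 2 = ‖n‖ ^ 2 / (2 * L) := by field_simp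
    nlinarith
  have hlim : Tendsto (fun r => -(‖n‖ / L) * r + ‖n‖ ^ 2 / (2 * L)) (nhdsWithin ‖n‖ (Set.Iio ‖n‖))
      (nhds (-(‖n‖ / L) * ‖n‖ + ‖n‖ ^ 2 / (2 * L))) :=
    (Continuous.tendsto (by fun_prop) _).mono_left nhdsWithin_le_nhds
  have := ge_of_tendsto hlim (eventually_nhdsWithin_of_forall hbound)
  have hval : -(‖n‖ / L) * ‖n‖ + ‖n‖ ^ 2 / (2 * L) = -(‖n‖ ^ 2 / (2 * L)) := by
    field_simp; ring
  linarith

theorem image_le_sub_norm_sq_div_of_forall_le {f : E → ℝ} {g : E → E →L[ℝ] ℝ} {L : ℝ}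
    (hL : 0 < L) (hf : ∀ p, HasFDerivAt f (g p) p) (hg : ∀ p q, ‖g p - g q‖ ≤ L * ‖p - q‖)
    {x y : E}
    (hy : ∀ u, g x (y - x) + L / 2 * ‖y - x‖ ^ 2 ≤ g x (u - x) + L / 2 * ‖u - x‖ ^ 2) :
    f y ≤ f x - ‖g x‖ ^ 2 / (2 * L) := by
  linarith [image_le_add_apply_sub_add_sq_of_lipschitz_fderiv hf hg x y,
    apply_sub_add_sq_le_of_forall_le hL hy]

end Smooth

section Bregman

variable {E : Type*} [NormedAddCommGroup E] [NormedSpace ℝ E]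

theorem HasFDerivAt.eq_of_forall_sub_le {ψ : E → ℝ} {ψ' w : E →L[ℝ] ℝ} {q : E}
    (hψ : HasFDerivAt ψ ψ' q) (hmax : ∀ p, w p - ψ p ≤ w q - ψ q) : ψ' = w := by
  have h := IsLocalMax.hasFDerivAt_eq_zero (Eventually.of_forall hmax)
    (w.hasFDerivAt.sub hψ)
  exact (sub_eq_zero.1 h).symm

/-- The Bregman divergence `D_{ψ*}(w, w')`, with `gs` in the role of `∇ψ*`. -/
def dualBregman (ψs : (E →L[ℝ] ℝ) → ℝ) (gs : (E →L[ℝ] ℝ) → E) (w w' : E →L[ℝ] ℝ) : ℝ :=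
  ψs w - ψs w' - (w - w') (gs w')

variable (ψs : (E →L[ℝ] ℝ) → ℝ) (gs : (E →L[ℝ] ℝ) → E)

@[simp]
theorem dualBregman_self (w : E →L[ℝ] ℝ) : dualBregman ψs gs w w = 0 := by
  simp [dualBregman]

theorem dualBregman_sub_dualBregman (w w' v : E →L[ℝ] ℝ) :
    dualBregman ψs gs w v - dualBregman ψs gs w' v =
      dualBregman ψs gs w w' + (w - w') (gs w' - gs v) := by
  simp only [dualBregman, map_sub, sub_apply]
  ring

theorem sum_dualBregman_succ_sub (a : ℕ → ℝ) (z : ℕ → E →L[ℝ] ℝ) (j : ℕ) :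
    ∑ i ∈ range (j + 1 + 1), a i * dualBregman ψs gs (z (j + 1)) (z i)
        - ∑ i ∈ range (j + 1), a i * dualBregman ψs gs (z j) (z i) =
      (∑ i ∈ range (j + 1), a i) * dualBregman ψs gs (z (j + 1)) (z j)
        + (z (j + 1) - z j) ((∑ i ∈ range (j + 1), a i) • gs (z j)
          - ∑ i ∈ range (j + 1), a i • gs (z i)) := by
  rw [sum_range_succ, dualBregman_self, mul_zero, add_zero, ← sum_sub_distrib]
  simp_rw [← mul_sub, dualBregman_sub_dualBregman, mul_add]
  rw [sum_add_distrib, ← sum_mul]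
  congr 1
  simp only [map_sub, map_sum, map_smul, smul_eq_mul, mul_sub, sum_sub_distrib, sum_mul]

theorem dualBregman_le_norm_sub_sq_div {ψ : E → ℝ} {gψ : E → E →L[ℝ] ℝ} {μ : ℝ} (hμ : 0 < μ)
    (hsc : ∀ p q, ψ q ≥ ψ p + gψ p (q - p) + μ / 2 * ‖q - p‖ ^ 2)
    (hψs : ∀ w, ψs w = w (gs w) - ψ (gs w)) {w w' : E →L[ℝ] ℝ} (hgrad : gψ (gs w') = w') :
    dualBregman ψs gs w w' ≤ ‖w - w'‖ ^ 2 / (2 * μ) := by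
  have hconv := hsc (gs w') (gs w)
  have hdual : (w - w') (gs w - gs w') ≤ ‖w - w'‖ * ‖gs w - gs w'‖ :=
    (le_abs_self _).trans ((w - w').le_opNorm _)
  rw [hgrad] at hconv
  rw [dualBregman, hψs, hψs, le_div_iff₀ (by positivity)]
  simp only [map_sub, sub_apply] at hconv hdual ⊢
  nlinarith [sq_nonneg (‖w - w'‖ - μ * ‖gs w - gs w'‖)]

theorem dualBregman_sub_smul_le {ψ : E → ℝ} {gψ : E → E →L[ℝ] ℝ} {μ : ℝ} (hμ : 0 < μ)
    (hsc : ∀ p q, ψ q ≥ ψ p + gψ p (q - p) + μ / 2 * ‖q - p‖ ^ 2)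
    (hψs : ∀ w, ψs w = w (gs w) - ψ (gs w)) {w : E →L[ℝ] ℝ} (hgrad : gψ (gs w) = w)
    (t : ℝ) (n : E →L[ℝ] ℝ) :
    dualBregman ψs gs (w - t • n) w ≤ t ^ 2 * ‖n‖ ^ 2 / (2 * μ) := by
  simpa [norm_smul, mul_pow] using dualBregman_le_norm_sub_sq_div ψs gs hμ hsc hψs hgrad
    (w := w - t • n)

theorem potential_succ_sub_eq {f : E → ℝ} {n : E →L[ℝ] ℝ} {a b A B : ℕ → ℝ} {H : ℝ}
    {x y : ℕ → E} {z : ℕ → E →L[ℝ] ℝ} {C : ℕ → ℝ} {j : ℕ}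
    (ha : a (j + 1) ≠ 0) (hA₀ : A j ≠ 0) (hA₁ : A (j + 1) ≠ 0)
    (hA : ∀ k, A k = ∑ i ∈ range (k + 1), a i) (hB : ∀ k, B k = ∑ i ∈ range (k + 1), b i)
    (hBj : B j = H * A j)
    (hx : x (j + 1) = y j + (a (j + 1) / A (j + 1)) • gs (z j)
      - (a (j + 1) / (A (j + 1) * A j)) • ∑ i ∈ range (j + 1), a i • gs (z i))
    (hz : z (j + 1) = z j - (a (j + 1) / A (j + 1) * H) • n)
    (hC : ∀ k, C k = B k * f (y k) - ∑ i ∈ range (k + 1), b i * f (y i)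
      + ∑ i ∈ range (k + 1), a i * dualBregman ψs gs (z k) (z i)) :
    C (j + 1) - C j = B j * (f (y (j + 1)) - f (y j))
      + A j * dualBregman ψs gs (z (j + 1)) (z j) - B j * n (x (j + 1) - y j) := by
  set α := a (j + 1) / A (j + 1)
  have hα : α ≠ 0 := div_ne_zero ha hA₁
  have hxstep : A j • gs (z j) - ∑ i ∈ range (j + 1), a i • gs (z i)
      = (A j / α) • (x (j + 1) - y j) := by
    have hcoef : A j / α * (a (j + 1) / (A (j + 1) * A j)) = 1 := by
      simp only [α]
      field_simp
    rw [hx, add_sub_assoc, add_sub_cancel_left, smul_sub, smul_smul, smul_smul,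
      div_mul_cancel₀ _ hα, hcoef, one_smul]
  have hcross : (z (j + 1) - z j) (A j • gs (z j) - ∑ i ∈ range (j + 1), a i • gs (z i))
      = -(B j * n (x (j + 1) - y j)) := by
    rw [hz, sub_sub_cancel_left, hxstep, neg_apply, smul_apply, map_smul, smul_eq_mul,
      smul_eq_mul, hBj]
    field_simp
  have hsum := sum_dualBregman_succ_sub ψs gs a z j
  rw [← hA, hcross] at hsum
  rw [hC, hC, hB (j + 1), sum_range_succ b, ← hB j,
    sum_range_succ (fun i => b i * f (y i)) (j + 1)]
  linear_combination hsum

end Bregman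

theorem stmt_18_general {E : Type*} [NormedAddCommGroup E] [NormedSpace ℝ E]
    (μ L εH c : ℝ) (hμ : 0 < μ) (hL : 0 < L)
    (f : E → ℝ) (g : E → E →L[ℝ] ℝ) (hdiff : ∀ p, HasFDerivAt f (g p) p)
    (hfsmooth : ∀ p q, ‖g p - g q‖ ≤ L * ‖p - q‖)
    (hfweak : ∀ p q, f q ≥ f p + g p (q - p) - εH / 2 * ‖q - p‖ ^ 2)
    (ψ : E → ℝ) (gψ : E → E →L[ℝ] ℝ) (hψdiff : ∀ p, HasFDerivAt ψ (gψ p) p)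
    (hψsc : ∀ p q, ψ q ≥ ψ p + gψ p (q - p) + μ / 2 * ‖q - p‖ ^ 2)
    (ψs : (E →L[ℝ] ℝ) → ℝ) (gs : (E →L[ℝ] ℝ) → E)
    (hψs : ∀ w, ψs w = w (gs w) - ψ (gs w))
    (hargmax : ∀ w, ∀ p, w p - ψ p ≤ w (gs w) - ψ (gs w))
    (D : (E →L[ℝ] ℝ) → (E →L[ℝ] ℝ) → ℝ)
    (hD : ∀ w w', D w w' = ψs w - ψs w' - (w - w') (gs w'))
    (a b A B H : ℕ → ℝ)
    (hapos : ∀ i, 0 < a i)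
    (hApos : ∀ i, 0 < A i) (hHpos : ∀ i, 0 < H i)
    (hA : ∀ k, A k = ∑ i ∈ Finset.range (k + 1), a i)
    (hB : ∀ k, B k = ∑ i ∈ Finset.range (k + 1), b i)
    (hBH : ∀ k ≥ 1, B (k - 1) = H k * A (k - 1))
    (hstep : ∀ k ≥ 1, (a k / A k) ^ 2 = c * μ / (L * H k))
    (x y : ℕ → E) (z : ℕ → E →L[ℝ] ℝ)
    (hx : ∀ k ≥ 1, x k = y (k - 1) + (a k / A k) • gs (z (k - 1))
      - (a k / (A k * A (k - 1))) • ∑ i ∈ Finset.range k, a i • gs (z i))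
    (hz : ∀ k ≥ 1, z k = z (k - 1) - ((a k / A k) * H k) • g (x k))
    (hy : ∀ k ≥ 1, ∀ u : E,
      g (x k) (y k - x k) + L / 2 * ‖y k - x k‖ ^ 2 ≤
        g (x k) (u - x k) + L / 2 * ‖u - x k‖ ^ 2)
    (C : ℕ → ℝ)
    (hC : ∀ k, C k = B k * f (y k) - ∑ i ∈ Finset.range (k + 1), b i * f (y i)
      + ∑ i ∈ Finset.range (k + 1), a i * D (z k) (z i)) :
    ∀ k ≥ 1, C k - C (k - 1) ≤
      -(1 - c) * (B (k - 1) / (2 * L)) * ‖g (x k)‖ ^ 2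
        + B (k - 1) * (εH / 2) * ‖x k - y (k - 1)‖ ^ 2 := by
  obtain rfl : D = dualBregman ψs gs := funext₂ hD
  rintro k hk
  obtain ⟨j, rfl⟩ : ∃ j, k = j + 1 := ⟨k - 1, by omega⟩
  rw [Nat.add_sub_cancel]
  set n := g (x (j + 1))
  set h := a (j + 1) / A (j + 1) * H (j + 1)
  have hBj : B j = H (j + 1) * A j := by simpa using hBH (j + 1) le_add_self
  have hzk : z (j + 1) = z j - h • n := by simpa using hz (j + 1) le_add_self
  have hpot := potential_succ_sub_eq ψs gs (hapos _).ne' (hApos j).ne' (hApos _).ne' hA hB hBj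
    (by simpa using hx (j + 1) le_add_self) hzk hC
  have hdesc : f (y (j + 1)) ≤ f (x (j + 1)) - ‖n‖ ^ 2 / (2 * L) :=
    image_le_sub_norm_sq_div_of_forall_le hL hdiff hfsmooth (hy (j + 1) le_add_self)
  have hweak : f (x (j + 1)) - f (y j) ≤ n (x (j + 1) - y j) + εH / 2 * ‖x (j + 1) - y j‖ ^ 2 := by
    have hconv := hfweak (x (j + 1)) (y j)
    rw [← neg_sub (x (j + 1)), map_neg, norm_neg] at hconv
    linarith
  have hbreg : dualBregman ψs gs (z (j + 1)) (z j) ≤ h ^ 2 * ‖n‖ ^ 2 / (2 * μ) :=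
    hzk ▸ dualBregman_sub_smul_le ψs gs hμ hψsc hψs
      ((hψdiff _).eq_of_forall_sub_le (hargmax (z j))) h n
  have hBpos : 0 ≤ B j := by rw [hBj]; exact mul_nonneg (hHpos _).le (hApos j).le
  have hApos' : 0 ≤ A j := (hApos j).le
  calc C (j + 1) - C j
      ≤ B j * (n (x (j + 1) - y j) + εH / 2 * ‖x (j + 1) - y j‖ ^ 2 - ‖n‖ ^ 2 / (2 * L))
        + A j * (h ^ 2 * ‖n‖ ^ 2 / (2 * μ)) - B j * n (x (j + 1) - y j) := by
        rw [hpot]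
        gcongr B j * ?_ + A j * ?_ - _
        linarith
    _ = _ := by
        rw [mul_pow, hstep (j + 1) le_add_self, hBj]
        field_simp
        ring

/-- Discretization-error bound for GMD_B in a (possibly non-Euclidean) normed space: with
`x_k = y_{k-1} + (a_k/A_k)∇ψ*(z_{k-1}) - (a_k/(A_k A_{k-1}))Σ_{i=0}^{k-1} a_i ∇ψ*(z_i)`,
`z_k = z_{k-1} - (a_k/A_k)H_k∇f(x_k)`,
`y_k = argmin_u {⟨∇f(x_k), u - x_k⟩ + (L/2)‖u - x_k‖²}`, started at `x₀ = y₀ = ∇ψ*(z₀)`,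
`ψ` `μ`-strongly convex, `f` `L`-smooth and `ε_H`-weakly convex (`ε_H ∈ [0,L]`),
`B_{k-1} = H_k A_{k-1}`, `(a_k/A_k)² = cμ/(L H_k)` with `c ∈ [0,1]`, the error
`E_k = C_k - C_{k-1}` of the potential
`C_k = B_k f(y_k) - Σ_{i=0}^k b_i f(y_i) + Σ_{i=0}^k a_i D_{ψ*}(z_k, z_i)` satisfies
`E_k ≤ -(1-c)(B_{k-1}/(2L))‖∇f(x_k)‖_*² + B_{k-1}(ε_H/2)‖x_k - y_{k-1}‖²`
(the dual norm `‖·‖_*` is the operator norm on `E →L[ℝ] ℝ`). -/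
theorem stmt_18 {E : Type*} [NormedAddCommGroup E] [NormedSpace ℝ E] [FiniteDimensional ℝ E]
    (μ L εH c : ℝ) (hμ : 0 < μ) (hL : 0 < L)
    (hεH : εH ∈ Set.Icc (0 : ℝ) L) (hc : c ∈ Set.Icc (0 : ℝ) 1)
    (f : E → ℝ) (g : E → E →L[ℝ] ℝ) (hdiff : ∀ p, HasFDerivAt f (g p) p)
    (hfsmooth : ∀ p q, ‖g p - g q‖ ≤ L * ‖p - q‖)
    (hfweak : ∀ p q, f q ≥ f p + g p (q - p) - εH / 2 * ‖q - p‖ ^ 2)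
    (ψ : E → ℝ) (gψ : E → E →L[ℝ] ℝ) (hψdiff : ∀ p, HasFDerivAt ψ (gψ p) p)
    (hψsc : ∀ p q, ψ q ≥ ψ p + gψ p (q - p) + μ / 2 * ‖q - p‖ ^ 2)
    (ψs : (E →L[ℝ] ℝ) → ℝ) (gs : (E →L[ℝ] ℝ) → E)
    (hψs : ∀ w, ψs w = w (gs w) - ψ (gs w))
    (hargmax : ∀ w, ∀ p, w p - ψ p ≤ w (gs w) - ψ (gs w))
    (D : (E →L[ℝ] ℝ) → (E →L[ℝ] ℝ) → ℝ)
    (hD : ∀ w w', D w w' = ψs w - ψs w' - (w - w') (gs w'))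
    (a b A B H : ℕ → ℝ)
    (hapos : ∀ i, 0 < a i) (hbpos : ∀ i, 0 < b i)
    (hApos : ∀ i, 0 < A i) (hHpos : ∀ i, 0 < H i)
    (hA : ∀ k, A k = ∑ i ∈ Finset.range (k + 1), a i)
    (hB : ∀ k, B k = ∑ i ∈ Finset.range (k + 1), b i)
    (hBH : ∀ k ≥ 1, B (k - 1) = H k * A (k - 1))
    (hstep : ∀ k ≥ 1, (a k / A k) ^ 2 = c * μ / (L * H k))
    (x y : ℕ → E) (z : ℕ → E →L[ℝ] ℝ)
    (hx0 : x 0 = gs (z 0)) (hy0 : y 0 = gs (z 0))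
    (hx : ∀ k ≥ 1, x k = y (k - 1) + (a k / A k) • gs (z (k - 1))
      - (a k / (A k * A (k - 1))) • ∑ i ∈ Finset.range k, a i • gs (z i))
    (hz : ∀ k ≥ 1, z k = z (k - 1) - ((a k / A k) * H k) • g (x k))
    (hy : ∀ k ≥ 1, ∀ u : E,
      g (x k) (y k - x k) + L / 2 * ‖y k - x k‖ ^ 2 ≤
        g (x k) (u - x k) + L / 2 * ‖u - x k‖ ^ 2)
    (C : ℕ → ℝ)
    (hC : ∀ k, C k = B k * f (y k) - ∑ i ∈ Finset.range (k + 1), b i * f (y i)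
      + ∑ i ∈ Finset.range (k + 1), a i * D (z k) (z i)) :
    ∀ k ≥ 1, C k - C (k - 1) ≤
      -(1 - c) * (B (k - 1) / (2 * L)) * ‖g (x k)‖ ^ 2
        + B (k - 1) * (εH / 2) * ‖x k - y (k - 1)‖ ^ 2 :=
  stmt_18_general μ L εH c hμ hL f g hdiff hfsmooth hfweak ψ gψ hψdiff hψsc ψs gs hψs hargmax D hD a
    b A B H hapos hApos hHpos hA hB hBH hstep x y z hx hz hy C hC
end
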